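/- There exists an absolute constant c > 0 such that the following holds. Let A be an n×n symmetric random matrix with entries A_{ij} = A_{ji} = Y_{ij}, where the random variables Y_{ij} for all pairs (i,j) with 1 ≤ i ≤ j ≤ n are independent, each moment bounded with parameter L = 1 and satisfying E[Y_{ij}] = 0. Let P(A) = Σ_{σ ∈ S_n} Π_{i=1}^n A_{i,σ(i)} denote the permanent of A. Then for every t > 0, Pr[ |P(A)| ≥ t·√(n!) ] ≤ max{ e^{−n}, e² · e^{−c·t^{2/n}} }. -/

import Mathlib

open MeasureTheory ProbabilityTheory Finset

/-- A real random variable `Z` is *moment bounded* with parameter `L > 0` if all its absolute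
moments exist and for every integer `i ≥ 1`, `E[|Z|^i] ≤ i·L·E[|Z|^{i-1}]`. -/
def MomentBounded {Ω : Type*} [MeasurableSpace Ω] (P : Measure Ω) (Z : Ω → ℝ) (L : ℝ) : Prop :=
  (∀ i : ℕ, Integrable (fun ω => |Z ω| ^ i) P) ∧
  ∀ i : ℕ, 1 ≤ i → (∫ ω, |Z ω| ^ i ∂P) ≤ i * L * ∫ ω, |Z ω| ^ (i - 1) ∂P

/-! Expanding `P(A)²` gives a sum over pairs `(σ, τ)` of permutations of
`E ∏ₑ Y_e ^ (m_σ e + m_τ e)`, where `m_σ e ≤ 2` is the multiplicity of the edge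
`e = s(i, σ i)` in `σ`. By independence and `E Y_e = 0` the term vanishes as soon as some edge
has total multiplicity one, and otherwise it is at most `∏ₑ k_e! ≤ 16ⁿ`.

Such pairs are few. On the set `B` of points whose `τ`-edge is not a `σ`-edge, both `σ` and `τ`
are fixed-point-free involutions; the union of these two matchings is bipartite, and walking along
it alternately by `σ` and by `τ` is a single permutation `h`. The pair `(σ, τ)` is determined by
`h` and three subsets of the points, so there are at most `8ⁿ n!` such pairs and
`E P(A)² ≤ 128ⁿ n!`. Chebyshev's inequality bounds the tail probability by `(128 / t^(2/n))ⁿ`,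
which is at most `e⁻ⁿ` once `t^(2/n) > 512`; below that threshold the second term of the maximum,
with `c = 1/256`, is at least one. -/

section Coloring

variable {α : Type*}

theorem Equiv.Perm.not_sameCycle_mul_apply {M M' : Perm α} (hM : M * M = 1) (hM' : M' * M' = 1)
    (hMx : ∀ x, M x ≠ x) (hM'x : ∀ x, M' x ≠ x) (x : α) :
    ¬ (M * M').SameCycle x (M' x) := by
  set ρ := M * M'
  have hρM' : SemiconjBy M' ρ ρ⁻¹ := by
    simp only [SemiconjBy, ρ, mul_inv_rev, ← mul_assoc, inv_eq_of_mul_eq_one_right hM,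
      inv_eq_of_mul_eq_one_right hM']
  -- conjugating by `M'` inverts `ρ`, so `ρ ^ k * M' * ρ ^ k = M'`
  have hconj (k : ℤ) (y : α) : (ρ ^ k) (M' ((ρ ^ k) y)) = M' y := by
    have h := (hρM'.zpow_right k).eq
    rw [inv_zpow', zpow_neg] at h
    simp only [← Perm.mul_apply, ← mul_assoc]
    rw [mul_assoc _ M', h, ← mul_assoc, mul_inv_cancel, one_mul]
  rintro ⟨i, hi⟩
  obtain ⟨k, rfl | rfl⟩ := Int.even_or_odd' i
  · apply hM'x ((ρ ^ k) x)
    apply (ρ ^ k).injective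
    rw [hconj, ← hi, two_mul, zpow_add, Perm.mul_apply]
  · apply hMx (M' ((ρ ^ k) x))
    apply (ρ ^ k).injective
    rw [hconj, ← hi, show 2 * k + 1 = k + 1 + k by ring, zpow_add, zpow_add, zpow_one]
    simp only [Perm.mul_apply, ρ]

theorem Function.Involutive.exists_set_swapped [Finite α] {M M' : α → α} (hM : Involutive M)
    (hM' : Involutive M') (hMx : ∀ x, M x ≠ x) (hM'x : ∀ x, M' x ≠ x) :
    ∃ S : Set α, ∀ x, (M x ∈ S ↔ x ∉ S) ∧ (M' x ∈ S ↔ x ∉ S) := by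
  classical
  have := Fintype.ofFinite α
  let : LinearOrder α := LinearOrder.lift' _ (Fintype.equivFin α).injective
  set ρ := hM.toPerm M * hM'.toPerm M'
  have hρ (y : α) : ρ y = M (M' y) := rfl
  have self_mem (x : α) : x ∈ univ.filter (ρ.SameCycle x) := by simp [Equiv.Perm.SameCycle.refl]
  -- colour `x` according to whether its `ρ`-cycle or that of `M' x` has the smaller minimum
  let rep (x : α) : α := (univ.filter (ρ.SameCycle x)).min' ⟨x, self_mem x⟩
  have rep_eq (x y : α) (h : ρ.SameCycle x y) : rep x = rep y := by
    simp only [rep]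
    congr 1
    ext z
    simp only [mem_filter, mem_univ, true_and]
    exact ⟨h.symm.trans, h.trans⟩
  have rep_ne (x : α) : rep x ≠ rep (M' x) := by
    intro h
    have hx := (univ.filter (ρ.SameCycle x)).min'_mem ⟨x, self_mem x⟩
    have hy := (univ.filter (ρ.SameCycle (M' x))).min'_mem ⟨M' x, self_mem _⟩
    simp only [mem_filter, mem_univ, true_and] at hx hy
    refine Equiv.Perm.not_sameCycle_mul_apply (M := hM.toPerm M) (M' := hM'.toPerm M')
      (Equiv.ext hM) (Equiv.ext hM') hMx hM'x x (hx.trans ?_)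
    change ρ.SameCycle (rep x) (M' x)
    rw [h]
    exact hy.symm
  have rep_M (x : α) : rep (M x) = rep (M' x) := (rep_eq _ _ ⟨1, by simp [hρ, hM' x]⟩).symm
  have rep_M'M (x : α) : rep (M' (M x)) = rep x :=
    rep_eq _ _ ⟨1, by simp [hρ, hM' (M x), hM x]⟩
  refine ⟨{x | rep x < rep (M' x)}, fun x => ?_⟩
  simp only [Set.mem_ofPred_eq, not_lt, rep_M, rep_M'M, hM' x]
  exact ⟨(rep_ne x).symm.le_iff_lt.symm, (rep_ne x).symm.le_iff_lt.symm⟩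

theorem exists_set_swapped_on [Finite α] {B : Set α} {M M' : α → α}
    (hMB : Set.MapsTo M B B) (hM'B : Set.MapsTo M' B B) (hM : ∀ x ∈ B, M (M x) = x)
    (hM' : ∀ x ∈ B, M' (M' x) = x) (hMx : ∀ x ∈ B, M x ≠ x) (hM'x : ∀ x ∈ B, M' x ≠ x) :
    ∃ S : Set α, ∀ x ∈ B, (M x ∈ S ↔ x ∉ S) ∧ (M' x ∈ S ↔ x ∉ S) := by
  obtain ⟨S, hS⟩ := Function.Involutive.exists_set_swapped (M := hMB.restrict)
    (M' := hM'B.restrict) (fun x => Subtype.ext (hM x x.2)) (fun x => Subtype.ext (hM' x x.2))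
    (fun x h => hMx x x.2 (congrArg Subtype.val h))
    (fun x h => hM'x x x.2 (congrArg Subtype.val h))
  refine ⟨{x | ∃ hx : x ∈ B, ⟨x, hx⟩ ∈ S}, fun x hx => ?_⟩
  simpa [hx, hMB hx, hM'B hx, Set.MapsTo.restrict, Subtype.map] using hS ⟨x, hx⟩

end Coloring

section EdgeMultiplicity

open Equiv

variable {α : Type*} [Fintype α] [DecidableEq α]

def edgeMult (σ : Perm α) (e : Sym2 α) : ℕ := #{i | s(i, σ i) = e}

theorem mem_filter_edge_eq {σ : Perm α} {a b i : α} :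
    i ∈ ({i | s(i, σ i) = s(a, b)} : Finset α) ↔ i = a ∧ σ i = b ∨ i = b ∧ σ i = a := by
  simp

theorem sum_edgeMult (σ : Perm α) : ∑ e, edgeMult σ e = Fintype.card α :=
  (card_eq_sum_card_fiberwise fun i _ => mem_univ s(i, σ i)).symm

theorem edgeMult_le_two (σ : Perm α) (e : Sym2 α) : edgeMult σ e ≤ 2 := by
  induction e with | _ a b
  calc edgeMult σ s(a, b) ≤ #{a, b} := card_le_card fun i hi => by
        rcases mem_filter_edge_eq.mp hi with ⟨rfl, -⟩ | ⟨rfl, -⟩ <;> simp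
    _ ≤ 2 := card_le_two

theorem edgeMult_eq_zero_iff {σ : Perm α} {a b : α} :
    edgeMult σ s(a, b) = 0 ↔ σ a ≠ b ∧ σ b ≠ a := by
  simp only [edgeMult, card_eq_zero, filter_eq_empty_iff, mem_univ, true_implies, Sym2.eq_iff]
  grind

theorem edgeMult_apply_eq_one {σ : Perm α} {a : α} (h : σ (σ a) = a → σ a = a) :
    edgeMult σ s(a, σ a) = 1 := by
  rw [edgeMult, card_eq_one]
  refine ⟨a, eq_singleton_iff_unique_mem.mpr ⟨by simp, fun i hi => ?_⟩⟩
  rcases mem_filter_edge_eq.mp hi with ⟨rfl, -⟩ | ⟨rfl, hi⟩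
  · rfl
  · exact h hi

theorem prod_apply_eq_prod_pow_edgeMult {M : Type*} [CommMonoid M] (f : Sym2 α → M)
    (σ : Perm α) : ∏ i, f s(i, σ i) = ∏ e, f e ^ edgeMult σ e := by
  rw [← prod_fiberwise' univ (fun i => s(i, σ i)) f]
  simp [edgeMult]

def NoSingleEdge (σ τ : Perm α) : Prop := ∀ e, edgeMult σ e + edgeMult τ e ≠ 1

instance (σ τ : Perm α) : Decidable (NoSingleEdge σ τ) := by
  unfold NoSingleEdge; infer_instance

variable {σ τ : Perm α}

theorem NoSingleEdge.symm (h : NoSingleEdge σ τ) : NoSingleEdge τ σ :=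
  fun e => by rw [add_comm]; exact h e

theorem NoSingleEdge.covers_left_edge (h : NoSingleEdge σ τ) {a : α}
    (ha : σ (σ a) = a → σ a = a) : τ a = σ a ∨ τ (σ a) = a := by
  by_contra hτ
  have := h s(a, σ a)
  rw [edgeMult_apply_eq_one ha, edgeMult_eq_zero_iff.mpr (by tauto)] at this
  exact this rfl

end EdgeMultiplicity

section Encoding

open Equiv

variable {α : Type*} [Fintype α] [DecidableEq α] {σ τ : Perm α}

def unshared (σ τ : Perm α) : Set α := {i | σ i ≠ τ i ∧ σ (τ i) ≠ i}

open Classical in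
noncomputable def decodeLeft (B S : Set α) (P : Perm α) (x : α) : α :=
  if x ∈ B ∧ x ∉ S then P.symm x else P x

open Classical in
noncomputable def decodeRight (B S F : Set α) (P : Perm α) (x : α) : α :=
  if x ∈ B then (if x ∈ S then P.symm x else P x) else if x ∈ F then P x else P.symm x

namespace NoSingleEdge

variable {i : α}

theorem right_involutive_on (h : NoSingleEdge σ τ) (hi : i ∈ unshared σ τ) :
    τ (τ i) = i ∧ τ i ≠ i := by
  by_contra hc
  exact hi.1 ((h.symm.covers_left_edge (a := i) (by tauto)).resolve_right hi.2)

theorem right_apply_left_ne (h : NoSingleEdge σ τ) (hi : i ∈ unshared σ τ) : τ (σ i) ≠ i :=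
  fun hσ => hi.1 (τ.injective (hσ.trans (h.right_involutive_on hi).1.symm))

theorem left_involutive_on (h : NoSingleEdge σ τ) (hi : i ∈ unshared σ τ) :
    σ (σ i) = i ∧ σ i ≠ i := by
  by_contra hc
  rcases h.covers_left_edge (a := i) (by tauto) with hστ | hστ
  · exact hi.1 hστ.symm
  · exact h.right_apply_left_ne hi hστ

theorem mapsTo_left (h : NoSingleEdge σ τ) : Set.MapsTo σ (unshared σ τ) (unshared σ τ) :=
  fun i hi =>
    ⟨by rw [(h.left_involutive_on hi).1]; exact (h.right_apply_left_ne hi).symm,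
      fun hσ => h.right_apply_left_ne hi (σ.injective hσ)⟩

theorem mapsTo_right (h : NoSingleEdge σ τ) : Set.MapsTo τ (unshared σ τ) (unshared σ τ) :=
  fun i hi =>
    ⟨by rw [(h.right_involutive_on hi).1]; exact hi.2,
      by rw [(h.right_involutive_on hi).1]; exact fun hσ => hi.1 hσ⟩

theorem mapsTo_left_compl (h : NoSingleEdge σ τ) :
    Set.MapsTo σ (unshared σ τ)ᶜ (unshared σ τ)ᶜ := fun i hi hσi => by
  have hσσ : σ (σ i) = i := σ.injective (h.left_involutive_on hσi).1
  exact hi (hσσ ▸ h.mapsTo_left hσi)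

theorem exists_colorSet (h : NoSingleEdge σ τ) :
    ∃ S : Set α, ∀ x ∈ unshared σ τ, (σ x ∈ S ↔ x ∉ S) ∧ (τ x ∈ S ↔ x ∉ S) :=
  exists_set_swapped_on h.mapsTo_left h.mapsTo_right
    (fun _ hx => (h.left_involutive_on hx).1) (fun _ hx => (h.right_involutive_on hx).1)
    (fun _ hx => (h.left_involutive_on hx).2) (fun _ hx => (h.right_involutive_on hx).2)

noncomputable def colorSet (h : NoSingleEdge σ τ) : Set α := h.exists_colorSet.choose

theorem colorSet_spec (h : NoSingleEdge σ τ) (hi : i ∈ unshared σ τ) :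
    (σ i ∈ h.colorSet ↔ i ∉ h.colorSet) ∧ (τ i ∈ h.colorSet ↔ i ∉ h.colorSet) :=
  h.exists_colorSet.choose_spec i hi

open Classical in
noncomputable def alternatingFun (h : NoSingleEdge σ τ) (x : α) : α :=
  if x ∈ unshared σ τ ∧ x ∉ h.colorSet then τ x else σ x

theorem alternatingFun_injective (h : NoSingleEdge σ τ) :
    Function.Injective h.alternatingFun := by
  classical
  let g (y : α) : α :=
    if y ∈ unshared σ τ then (if y ∈ h.colorSet then τ y else σ y) else σ.symm y
  refine Function.LeftInverse.injective (g := g) fun x => ?_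
  by_cases hx : x ∈ unshared σ τ
  · have hS := h.colorSet_spec hx
    by_cases hxS : x ∈ h.colorSet
    · simp [g, alternatingFun, hx, hxS, h.mapsTo_left hx, hS.1, (h.left_involutive_on hx).1]
    · simp [g, alternatingFun, hx, hxS, h.mapsTo_right hx, hS.2, (h.right_involutive_on hx).1]
  · have hσx : σ x ∉ unshared σ τ := h.mapsTo_left_compl hx
    simp [g, alternatingFun, hx, hσx]

noncomputable def alternatingPerm (h : NoSingleEdge σ τ) : Perm α :=
  Equiv.ofBijective _ h.alternatingFun_injective.bijective_of_finite

theorem coe_left_eq (h : NoSingleEdge σ τ) :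
    ⇑σ = decodeLeft (unshared σ τ) h.colorSet h.alternatingPerm := by
  funext x
  rw [decodeLeft]
  split_ifs with hx
  · rw [eq_symm_apply]
    have hS := h.colorSet_spec hx.1
    simp [alternatingPerm, alternatingFun, h.mapsTo_left hx.1, hS.1, hx.2,
      (h.left_involutive_on hx.1).1]
  · simp [alternatingPerm, alternatingFun, hx]

theorem coe_right_eq (h : NoSingleEdge σ τ) :
    ⇑τ = decodeRight (unshared σ τ) h.colorSet {x | τ x = σ x} h.alternatingPerm := by
  funext x
  rw [decodeRight]
  by_cases hx : x ∈ unshared σ τ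
  · have hS := h.colorSet_spec hx
    by_cases hxS : x ∈ h.colorSet
    · simp only [hx, hxS, if_true, eq_symm_apply]
      simp [alternatingPerm, alternatingFun, h.mapsTo_right hx, hS.2,
        (h.right_involutive_on hx).1, hxS]
    · simp [alternatingPerm, alternatingFun, hx, hxS]
  · have hστ : σ (τ x) = x ∨ τ x = σ x := by
      simp only [unshared, Set.mem_ofPred_eq, not_and_or, not_not] at hx
      tauto
    by_cases hτσ : τ x = σ x
    · simp [alternatingPerm, alternatingFun, hx, hτσ]
    · have hτx : τ x ∉ unshared σ τ := fun hτx =>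
        hx (hστ.resolve_right hτσ ▸ h.mapsTo_left hτx)
      simp only [hx, hτσ, Set.mem_ofPred_eq, if_false, eq_symm_apply]
      simp [alternatingPerm, alternatingFun, hτx, hστ.resolve_right hτσ]

end NoSingleEdge

noncomputable def encodePair (p : {p : Perm α × Perm α // NoSingleEdge p.1 p.2}) :
    Set α × Set α × Set α × Perm α :=
  (unshared p.1.1 p.1.2, p.2.colorSet, {x | p.1.2 x = p.1.1 x}, p.2.alternatingPerm)

theorem encodePair_injective : Function.Injective (encodePair (α := α)) := by
  rintro ⟨p, h⟩ ⟨q, h'⟩ he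
  simp only [encodePair, Prod.mk.injEq] at he
  obtain ⟨hB, hS, hF, hP⟩ := he
  refine Subtype.ext (Prod.ext (DFunLike.coe_injective ?_) (DFunLike.coe_injective ?_))
  · rw [h.coe_left_eq, h'.coe_left_eq, hB, hS, hP]
  · rw [h.coe_right_eq, h'.coe_right_eq, hB, hS, hF, hP]

theorem card_noSingleEdge_le :
    #{p : Perm α × Perm α | NoSingleEdge p.1 p.2} ≤
      8 ^ Fintype.card α * (Fintype.card α).factorial := by
  classical
  rw [← Fintype.card_subtype]
  calc _ ≤ Fintype.card (Set α × Set α × Set α × Perm α) :=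
        Fintype.card_le_of_injective _ encodePair_injective
    _ = 8 ^ Fintype.card α * (Fintype.card α).factorial := by
        simp only [Fintype.card_prod, Fintype.card_set, Fintype.card_perm]
        rw [show 8 = 2 ^ 3 by rfl, ← pow_mul]
        ring

end Encoding

section Moments

variable {Ω : Type*} [MeasurableSpace Ω] {P : Measure Ω} {Z : Ω → ℝ} {L : ℝ}

theorem MomentBounded.integral_abs_pow_le [IsProbabilityMeasure P] (h : MomentBounded P Z L)
    (hL : 0 ≤ L) (k : ℕ) : ∫ ω, |Z ω| ^ k ∂P ≤ k.factorial * L ^ k := by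
  induction k with
  | zero => simp
  | succ k ih =>
    calc ∫ ω, |Z ω| ^ (k + 1) ∂P ≤ (k + 1 : ℕ) * L * ∫ ω, |Z ω| ^ k ∂P :=
          h.2 (k + 1) k.succ_pos
      _ ≤ (k + 1 : ℕ) * L * (k.factorial * L ^ k) := by gcongr
      _ = (k + 1).factorial * L ^ (k + 1) := by push_cast [Nat.factorial_succ]; ring

theorem MomentBounded.abs_integral_pow_le [IsProbabilityMeasure P] (h : MomentBounded P Z L)
    (hL : 0 ≤ L) (k : ℕ) : |∫ ω, Z ω ^ k ∂P| ≤ k.factorial * L ^ k :=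
  calc |∫ ω, Z ω ^ k ∂P| ≤ ∫ ω, |Z ω ^ k| ∂P := abs_integral_le_integral_abs
    _ = ∫ ω, |Z ω| ^ k ∂P := by simp_rw [abs_pow]
    _ ≤ k.factorial * L ^ k := h.integral_abs_pow_le hL k

theorem MomentBounded.memLp (h : MomentBounded P Z L) (hZ : AEStronglyMeasurable Z P)
    (k : ℕ) : MemLp Z k P := by
  rcases k.eq_zero_or_pos with rfl | hk
  · simpa using memLp_zero_iff_aestronglyMeasurable.mpr hZ
  refine (integrable_norm_rpow_iff hZ (by simp [hk.ne']) (by simp)).mp ?_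
  simpa [Real.rpow_natCast] using h.1 k

end Moments

section SecondMoment

open Equiv

variable {Ω : Type*} [MeasurableSpace Ω] {P : Measure Ω} [IsProbabilityMeasure P]
  {α : Type*} [Fintype α] {Z : Sym2 α → Ω → ℝ}

theorem memLp_two_prod_apply (hmeas : ∀ e, Measurable (Z e))
    (hmom : ∀ e, MomentBounded P (Z e) 1) (σ : Perm α) :
    MemLp (fun ω => ∏ i, Z s(i, σ i) ω) 2 P := by
  -- Hölder with `card α` factors, each in `L^(2 card α)`
  refine (MemLp.prod' (s := univ) fun i _ => (hmom s(i, σ i)).memLp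
    (hmeas _).aestronglyMeasurable (2 * Fintype.card α)).mono_exponent ?_
  rw [sum_const, card_univ, nsmul_eq_mul, ENNReal.le_inv_iff_le_inv, Nat.cast_mul,
    Nat.cast_ofNat, ENNReal.mul_inv (by simp) (by simp), mul_left_comm]
  exact mul_le_of_le_one_right' (ENNReal.mul_inv_le_one _)

theorem integral_prod_mul_prod_le [DecidableEq α] (hZ : iIndepFun Z P)
    (hmeas : ∀ e, Measurable (Z e)) (hmom : ∀ e, MomentBounded P (Z e) 1)
    (hzero : ∀ e, ∫ ω, Z e ω ∂P = 0) (σ τ : Perm α) :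
    ∫ ω, (∏ i, Z s(i, σ i) ω) * ∏ i, Z s(i, τ i) ω ∂P ≤
      if NoSingleEdge σ τ then (16 : ℝ) ^ Fintype.card α else 0 := by
  set k : Sym2 α → ℕ := fun e => edgeMult σ e + edgeMult τ e
  have hprod :
      ∫ ω, (∏ i, Z s(i, σ i) ω) * ∏ i, Z s(i, τ i) ω ∂P = ∏ e, ∫ ω, Z e ω ^ k e ∂P := by
    have hω (ω : Ω) : (∏ i, Z s(i, σ i) ω) * ∏ i, Z s(i, τ i) ω = ∏ e, Z e ω ^ k e := by
      rw [prod_apply_eq_prod_pow_edgeMult (Z · ω), prod_apply_eq_prod_pow_edgeMult (Z · ω),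
        ← prod_mul_distrib]
      simp_rw [← pow_add, k]
    simp_rw [hω]
    exact hZ.integral_fun_prod_comp (fun e => (hmeas e).aemeasurable)
      (fun e => (continuous_pow (k e)).aestronglyMeasurable)
  rw [hprod]
  split_ifs with h
  · calc ∏ e, ∫ ω, Z e ω ^ k e ∂P ≤ ∏ e, |∫ ω, Z e ω ^ k e ∂P| :=
          (le_abs_self _).trans (abs_prod _ _).le
      _ ≤ ∏ e, (4 : ℝ) ^ k e := by
          gcongr with e
          have hk : k e ≤ 4 := add_le_add (edgeMult_le_two σ e) (edgeMult_le_two τ e)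
          calc |∫ ω, Z e ω ^ k e ∂P| ≤ (k e).factorial := by
                simpa using (hmom e).abs_integral_pow_le zero_le_one (k e)
            _ ≤ (4 : ℝ) ^ k e := by exact_mod_cast (Nat.factorial_le_pow _).trans (by gcongr)
      _ = (16 : ℝ) ^ Fintype.card α := by
          rw [prod_pow_eq_pow_sum, sum_add_distrib, sum_edgeMult, sum_edgeMult, ← two_mul,
            pow_mul]
          norm_num
  · obtain ⟨e, he⟩ : ∃ e, k e = 1 := by simpa [NoSingleEdge] using h
    exact (prod_eq_zero (mem_univ e) (by simp [he, hzero])).le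

theorem integral_sq_sum_prod_le [DecidableEq α] (hZ : iIndepFun Z P)
    (hmeas : ∀ e, Measurable (Z e)) (hmom : ∀ e, MomentBounded P (Z e) 1)
    (hzero : ∀ e, ∫ ω, Z e ω ∂P = 0) :
    Integrable (fun ω => (∑ σ : Perm α, ∏ i, Z s(i, σ i) ω) ^ 2) P ∧
      ∫ ω, (∑ σ : Perm α, ∏ i, Z s(i, σ i) ω) ^ 2 ∂P ≤
        (128 : ℝ) ^ Fintype.card α * (Fintype.card α).factorial := by
  have hm := memLp_two_prod_apply hmeas hmom
  refine ⟨(memLp_finsetSum univ fun σ _ => hm σ).integrable_sq, ?_⟩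
  simp_rw [sq, sum_mul_sum]
  have hint (σ τ : Perm α) :
      Integrable (fun ω => (∏ i, Z s(i, σ i) ω) * ∏ i, Z s(i, τ i) ω) P :=
    (hm σ).integrable_mul (hm τ)
  rw [integral_finsetSum _ fun σ _ => integrable_finsetSum _ fun τ _ => hint σ τ]
  simp_rw [integral_finsetSum _ fun τ _ => hint _ τ]
  calc ∑ σ, ∑ τ, ∫ ω, (∏ i, Z s(i, σ i) ω) * ∏ i, Z s(i, τ i) ω ∂P
      ≤ ∑ σ : Perm α, ∑ τ : Perm α,
          if NoSingleEdge σ τ then (16 : ℝ) ^ Fintype.card α else 0 :=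
        sum_le_sum fun σ _ => sum_le_sum fun τ _ =>
          integral_prod_mul_prod_le hZ hmeas hmom hzero σ τ
    _ = #{p : Perm α × Perm α | NoSingleEdge p.1 p.2} * (16 : ℝ) ^ Fintype.card α := by
        rw [← Fintype.sum_prod_type', sum_ite, sum_const_zero, add_zero, sum_const,
          nsmul_eq_mul]
    _ ≤ (8 ^ Fintype.card α * (Fintype.card α).factorial : ℕ) *
          (16 : ℝ) ^ Fintype.card α := by
        gcongr
        exact card_noSingleEdge_le
    _ = (128 : ℝ) ^ Fintype.card α * (Fintype.card α).factorial := by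
        rw [show (128 : ℝ) = 8 * 16 by norm_num, mul_pow]
        push_cast
        ring

end SecondMoment

theorem Sym2.apply_sortEquiv_mk {α β : Type*} [LinearOrder α] {f : α → α → β}
    (hf : ∀ i j, f i j = f j i) (i j : α) :
    f (sortEquiv s(i, j)).1.1 (sortEquiv s(i, j)).1.2 = f i j := by
  rcases le_total i j with h | h <;> simp [h, hf j i]

theorem measureReal_abs_ge_le_integral_sq_div {Ω : Type*} [MeasurableSpace Ω]
    {P : Measure Ω} {X : Ω → ℝ} (hX : Integrable (fun ω => X ω ^ 2) P) {a : ℝ} (ha : 0 < a) :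
    P.real {ω | a ≤ |X ω|} ≤ (∫ ω, X ω ^ 2 ∂P) / a ^ 2 := by
  have hset : {ω | a ^ 2 ≤ X ω ^ 2} = {ω | a ≤ |X ω|} := by
    ext ω
    simp [sq_le_sq, abs_of_pos ha]
  rw [le_div_iff₀ (by positivity), mul_comm, ← hset]
  exact mul_meas_ge_le_integral_of_nonneg (ae_of_all _ fun ω => sq_nonneg (X ω)) hX _

theorem le_max_exp_of_le_pow_div_sq {C t p : ℝ} {n : ℕ} (hC : 0 < C) (ht : 0 < t)
    (hp1 : p ≤ 1) (hpC : p ≤ C ^ n / t ^ 2) :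
    p ≤ max (Real.exp (-n)) (Real.exp 2 * Real.exp (-(1 / (2 * C) * t ^ ((2 : ℝ) / n)))) := by
  rcases n.eq_zero_or_pos with rfl | hn
  · simpa using le_max_of_le_left hp1
  set s := t ^ ((2 : ℝ) / n)
  have hs : 0 < s := by positivity
  by_cases hsC : s ≤ 4 * C
  · refine le_max_of_le_right (hp1.trans ?_)
    rw [← Real.exp_add]
    refine Real.one_le_exp ?_
    have : 1 / (2 * C) * s ≤ 2 := by
      rw [one_div_mul_eq_div, div_le_iff₀ (by positivity)]
      linarith
    linarith
  · refine le_max_of_le_left (hpC.trans ?_)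
    have hsn : t ^ 2 = s ^ n := by
      rw [← Real.rpow_natCast s, ← Real.rpow_mul ht.le, div_mul_cancel₀ _ (by positivity)]
      norm_num
    have hCs : C / s ≤ Real.exp (-1) := by
      rw [Real.exp_neg, div_le_iff₀ hs]
      calc C ≤ 4⁻¹ * s := by linarith
        _ ≤ (Real.exp 1)⁻¹ * s := by
          gcongr
          exact Real.exp_one_lt_d9.le.trans (by norm_num)
    calc C ^ n / t ^ 2 = (C / s) ^ n := by rw [hsn, div_pow]
      _ ≤ Real.exp (-1) ^ n := by gcongr
      _ = Real.exp (-n) := by rw [← Real.exp_nat_mul]; ring_nf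

theorem symmetric_permanent_concentration :
    ∃ c : ℝ, 0 < c ∧
      ∀ (Ω : Type) (_ : MeasurableSpace Ω) (P : Measure Ω), IsProbabilityMeasure P →
      ∀ (n : ℕ) (Y : Fin n → Fin n → Ω → ℝ),
        (∀ i j, Measurable (Y i j)) →
        (∀ i j, Y i j = Y j i) →
        iIndepFun (m := fun _ => Real.measurableSpace)
          (fun p : {p : Fin n × Fin n // p.1 ≤ p.2} => Y p.1.1 p.1.2) P →
        (∀ i j, i ≤ j → MomentBounded P (Y i j) 1) →
        (∀ i j, i ≤ j → ∫ ω, Y i j ω ∂P = 0) →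
      ∀ t : ℝ, 0 < t →
        (P {ω | t * Real.sqrt (Nat.factorial n) ≤
            |∑ σ : Equiv.Perm (Fin n), ∏ i, Y i (σ i) ω|}).toReal ≤
          max (Real.exp (-(n : ℝ)))
            (Real.exp 2 * Real.exp (-(c * t ^ ((2 : ℝ) / (n : ℝ))))) := by
  refine ⟨1 / (2 * 128), by norm_num, fun Ω _ P _ n Y hmeas hsymm hindep hmom hzero t ht => ?_⟩
  obtain ⟨hint, hbound⟩ := integral_sq_sum_prod_le
    (Z := fun e => Y (Sym2.sortEquiv e).1.1 (Sym2.sortEquiv e).1.2)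
    ((iIndepFun_precomp_of_bijective Sym2.sortEquiv.bijective).mpr hindep)
    (fun _ => hmeas _ _) (fun e => hmom _ _ (Sym2.sortEquiv e).2)
    (fun e => hzero _ _ (Sym2.sortEquiv e).2)
  simp only [Sym2.apply_sortEquiv_mk hsymm, Fintype.card_fin] at hint hbound
  have hfac : (0 : ℝ) < n.factorial := by positivity
  refine le_max_exp_of_le_pow_div_sq (by norm_num) ht measureReal_le_one ?_
  calc _ ≤ (∫ ω, (∑ σ : Equiv.Perm (Fin n), ∏ i, Y i (σ i) ω) ^ 2 ∂P) /
        (t * Real.sqrt n.factorial) ^ 2 :=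
        measureReal_abs_ge_le_integral_sq_div hint (by positivity)
    _ ≤ 128 ^ n * n.factorial / (t ^ 2 * n.factorial) := by
        rw [mul_pow, Real.sq_sqrt hfac.le]
        gcongr
    _ = 128 ^ n / t ^ 2 := by field_simp
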